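/- arXiv:1907.12758 — 2 statements merged into one kernel-verified Lean document; each statement's English description precedes it below -/
import Mathlib

section
/- (Sliding-to-midpoint lemma) Let P be a finite set of points in ℝ², and for each p ∈ P let ℓ_p > 0 and a_p ∈ [0, ℓ_p] specify an anchoring offset, so that at rotation angle θ the segment at p is S_p(θ) = {p + (t − a_p)·u_θ : t ∈ [0, ℓ_p]} with u_θ = (−sin θ, cos θ). Suppose that for all θ and all distinct p, q ∈ P, S_p(θ) ∩ S_q(θ) = ∅. Then the midpoint-anchored segments M_p(θ) = {p + t·u_θ : t ∈ [−ℓ_p/2, ℓ_p/2]} also satisfy: for all θ and all distinct p, q, M_p(θ) ∩ M_q(θ) = ∅. -/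
/-!
If the midpoint-anchored segments at `p` and `q` meet at angle `θ`, then `q = p + c • u_θ` with
`|c| ≤ (ℓ_p + ℓ_q) / 2`. The sliding segments at `p` and `q` meet at angle `θ` exactly when
`(a_p - a_q) + c ∈ [-ℓ_q, ℓ_p]`, and at angle `θ + π`, where `u` is reversed, exactly when
`(a_p - a_q) - c ∈ [-ℓ_q, ℓ_p]`. The point `a_p - a_q` lies in this interval of length
`ℓ_p + ℓ_q`, so one of its two translates by `± c` does as well.
-/

open Real Set Metric

/-- The rotated vertical unit direction `(-sin θ, cos θ)`. -/
noncomputable def uDir (θ : ℝ) : EuclideanSpace ℝ (Fin 2) := WithLp.toLp 2 ![-Real.sin θ, Real.cos θ]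

/-- Sliding-model segment: length `ℓ`, anchored at offset `a ∈ [0, ℓ]` from its lower end,
rotated by angle `θ`. -/
noncomputable def slideSeg (p : EuclideanSpace ℝ (Fin 2)) (ℓ a θ : ℝ) :
    Set (EuclideanSpace ℝ (Fin 2)) :=
  (fun t : ℝ => p + (t - a) • uDir θ) '' Set.Icc 0 ℓ

/-- Segment of length `ℓ` anchored at its midpoint `p`, rotated by angle `θ`. -/
noncomputable def midseg (p : EuclideanSpace ℝ (Fin 2)) (ℓ θ : ℝ) :
    Set (EuclideanSpace ℝ (Fin 2)) :=
  (fun t : ℝ => p + t • uDir θ) '' Set.Icc (-(ℓ / 2)) (ℓ / 2)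

lemma uDir_add_pi (θ : ℝ) : uDir (θ + π) = -uDir θ := by
  ext i
  fin_cases i <;> simp [uDir, Real.sin_add, Real.cos_add]

lemma add_mem_Icc_or_sub_mem_Icc {x y e c : ℝ} (he : e ∈ Icc x y) (hc : |c| ≤ (y - x) / 2) :
    e + c ∈ Icc x y ∨ e - c ∈ Icc x y := by
  obtain ⟨hxe, hey⟩ := he
  obtain ⟨hc₁, hc₂⟩ := abs_le.mp hc
  rcases le_total 0 c with h0 | h0
  · by_cases hy : e + c ≤ y
    · exact .inl ⟨by linarith, hy⟩
    · exact .inr ⟨by linarith, by linarith⟩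
  · by_cases hx : x ≤ e + c
    · exact .inl ⟨hx, by linarith⟩
    · exact .inr ⟨by linarith, by linarith⟩

lemma not_disjoint_slideSeg {p q : EuclideanSpace ℝ (Fin 2)} {ℓp ℓq ap aq θ c : ℝ}
    (hq : q = p + c • uDir θ) (hℓp : 0 ≤ ℓp) (hℓq : 0 ≤ ℓq)
    (hc : ap - aq + c ∈ Icc (-ℓq) ℓp) :
    ¬Disjoint (slideSeg p ℓp ap θ) (slideSeg q ℓq aq θ) := by
  set e := ap - aq + c
  have hts : max e 0 - max (-e) 0 = e := by
    rcases le_total e 0 with h0 | h0 <;> simp [h0]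
  rw [not_disjoint_iff]
  refine ⟨p + (max e 0 - ap) • uDir θ,
    ⟨max e 0, ⟨le_max_right _ _, max_le hc.2 hℓp⟩, rfl⟩,
    ⟨max (-e) 0, ⟨le_max_right _ _, max_le (by linarith [hc.1]) hℓq⟩, ?_⟩⟩
  simp only [hq, add_assoc, ← add_smul]
  congr 2
  linarith

theorem stmt5_general (P : Finset (EuclideanSpace ℝ (Fin 2)))
    (ℓ a : EuclideanSpace ℝ (Fin 2) → ℝ)
    (ha : ∀ p ∈ P, a p ∈ Set.Icc 0 (ℓ p))
    (h : ∀ θ : ℝ, ∀ p ∈ P, ∀ q ∈ P, p ≠ q →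
      Disjoint (slideSeg p (ℓ p) (a p) θ) (slideSeg q (ℓ q) (a q) θ)) :
    ∀ θ : ℝ, ∀ p ∈ P, ∀ q ∈ P, p ≠ q →
      Disjoint (midseg p (ℓ p) θ) (midseg q (ℓ q) θ) := by
  intro θ p hp q hq hpq
  rw [Set.disjoint_left]
  rintro x ⟨t, ht, rfl⟩ ⟨s, hs, hx⟩
  simp only at hx
  obtain ⟨hap, hapℓ⟩ := ha p hp
  obtain ⟨haq, haqℓ⟩ := ha q hq
  have hqθ : q = p + (t - s) • uDir θ := by
    rw [sub_smul, ← add_sub_assoc, ← hx, add_sub_cancel_right]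
  have hqθπ : q = p + (-(t - s)) • uDir (θ + π) := by
    rwa [uDir_add_pi, neg_smul_neg]
  have hdiff : a p - a q ∈ Icc (-ℓ q) (ℓ p) := ⟨by linarith, by linarith⟩
  have hts : |t - s| ≤ (ℓ p - -ℓ q) / 2 :=
    abs_le.mpr ⟨by linarith [ht.1, hs.2], by linarith [ht.2, hs.1]⟩
  rcases add_mem_Icc_or_sub_mem_Icc hdiff hts with hθ | hθπ
  · exact not_disjoint_slideSeg hqθ (by linarith) (by linarith) hθ (h θ p hp q hq hpq)
  · exact not_disjoint_slideSeg hqθπ (by linarith) (by linarith) hθπ (h (θ + π) p hp q hq hpq)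

/-- If a sliding-model labeling is proper (no two segments ever intersect during rotation),
then re-anchoring every segment at its midpoint yields a proper labeling as well. -/
theorem stmt5 (P : Finset (EuclideanSpace ℝ (Fin 2)))
    (ℓ a : EuclideanSpace ℝ (Fin 2) → ℝ)
    (hℓ : ∀ p ∈ P, 0 < ℓ p)
    (ha : ∀ p ∈ P, a p ∈ Set.Icc 0 (ℓ p))
    (h : ∀ θ : ℝ, ∀ p ∈ P, ∀ q ∈ P, p ≠ q →
      Disjoint (slideSeg p (ℓ p) (a p) θ) (slideSeg q (ℓ q) (a q) θ)) :
    ∀ θ : ℝ, ∀ p ∈ P, ∀ q ∈ P, p ≠ q →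
      Disjoint (midseg p (ℓ p) θ) (midseg q (ℓ q) θ) :=
  stmt5_general P ℓ a ha h
end

section
/- Let p, q ∈ ℝ² be distinct, ℓ_p, ℓ_q > 0, and a_p ∈ [0, ℓ_p], a_q ∈ [0, ℓ_q] be anchoring offsets. If for all θ the segments S_p(θ) = {p + (t − a_p)·u_θ : t ∈ [0, ℓ_p]} and S_q(θ) = {q + (t − a_q)·u_θ : t ∈ [0, ℓ_q]} are disjoint, then ‖p − q‖ > (ℓ_p + ℓ_q)/2. -/
/-! Turn both segments onto the line through `p` and `q`, pointing from `p` to `q`. Disjointness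
forces the part of `S_p` beyond `p` and the part of `S_q` before `q` to fit between them:
`ℓp - ap + aq < ‖p - q‖`. The opposite orientation gives `ℓq - aq + ap < ‖p - q‖`, and the two
inequalities add up to the claim. -/

open Real Set Metric

lemma exists_eq_norm_smul_uDir (x : EuclideanSpace ℝ (Fin 2)) : ∃ θ, x = ‖x‖ • uDir θ := by
  set z : ℂ := ⟨x 1, -x 0⟩
  have hz : ‖z‖ = ‖x‖ := by
    rw [Complex.norm_eq_sqrt_sq_add_sq, EuclideanSpace.norm_eq]
    simp [Fin.sum_univ_two, z, add_comm]
  refine ⟨z.arg, ?_⟩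
  ext i
  fin_cases i
  · simp [uDir, ← hz, Complex.norm_mul_sin_arg, z]
  · simp [uDir, ← hz, Complex.norm_mul_cos_arg, z]

lemma sub_add_lt_of_disjoint_segments {V : Type*} [AddCommGroup V] [Module ℝ V] (p v : V)
    {ℓp ℓq ap aq d : ℝ} (hd : 0 ≤ d) (hap : ap ∈ Icc 0 ℓp) (haq : aq ∈ Icc 0 ℓq)
    (h : Disjoint ((fun t : ℝ => p + (t - ap) • v) '' Icc 0 ℓp)
      ((fun t : ℝ => (p + d • v) + (t - aq) • v) '' Icc 0 ℓq)) :
    ℓp - ap + aq < d := by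
  by_contra! hle
  obtain ⟨hap₀, hapℓ⟩ := hap
  obtain ⟨haq₀, haqℓ⟩ := haq
  -- along `v` the segments cover `[-ap, ℓp - ap]` and `[d - aq, d + ℓq - aq]`; `s` lies in both
  set s := max (-ap) (d - aq)
  have hs₁ : -ap ≤ s := le_max_left _ _
  have hs₂ : d - aq ≤ s := le_max_right _ _
  have hs₃ : s ≤ ℓp - ap := max_le (by linarith) (by linarith)
  have hs₄ : s ≤ d + ℓq - aq := max_le (by linarith) (by linarith)
  refine Set.not_disjoint_iff.mpr ⟨p + s • v, ?_, ?_⟩ h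
  · exact ⟨s + ap, ⟨by linarith, by linarith⟩, by simp only [add_sub_cancel_right]⟩
  · refine ⟨s - d + aq, ⟨by linarith, by linarith⟩, ?_⟩
    simp only [add_assoc, ← add_smul, add_sub_cancel_right, add_sub_cancel]

theorem stmt6_general (p q : EuclideanSpace ℝ (Fin 2)) (ℓp ℓq ap aq : ℝ)
    (hap : ap ∈ Set.Icc 0 ℓp) (haq : aq ∈ Set.Icc 0 ℓq)
    (h : ∀ θ : ℝ, Disjoint (slideSeg p ℓp ap θ) (slideSeg q ℓq aq θ)) :
    dist p q > (ℓp + ℓq) / 2 := by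
  obtain ⟨θ, hθ⟩ := exists_eq_norm_smul_uDir (q - p)
  have hq : q = p + dist p q • uDir θ := by
    rw [dist_comm, dist_eq_norm, ← hθ, add_sub_cancel]
  have hp : p = q + dist p q • uDir (θ + π) := by
    rw [uDir_add_pi, smul_neg, ← sub_eq_add_neg, eq_sub_iff_add_eq, ← hq]
  have hpq := sub_add_lt_of_disjoint_segments p (uDir θ) dist_nonneg hap haq (hq ▸ h θ)
  have hqp := sub_add_lt_of_disjoint_segments q (uDir (θ + π)) dist_nonneg haq hap
    (hp ▸ (h (θ + π)).symm)
  linarith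

theorem stmt6 (p q : EuclideanSpace ℝ (Fin 2)) (ℓp ℓq ap aq : ℝ)
    (hne : p ≠ q) (hℓp : 0 < ℓp) (hℓq : 0 < ℓq)
    (hap : ap ∈ Set.Icc 0 ℓp) (haq : aq ∈ Set.Icc 0 ℓq)
    (h : ∀ θ : ℝ, Disjoint (slideSeg p ℓp ap θ) (slideSeg q ℓq aq θ)) :
    dist p q > (ℓp + ℓq) / 2 :=
  stmt6_general p q ℓp ℓq ap aq hap haq h
end
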